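/- arXiv:1001.2343 — 2 statements merged into one kernel-verified Lean document; each statement's English description precedes it below -/
import Mathlib

section
/- Let L : ℝ → Mat(n,n,ℝ) be continuous, and for parameter α ∈ ℝ let L_α(t) = L(t) + α·M(t) with M continuous. Let Φ_α(t) be the solution of dΦ_α/dt = L_α(t)·Φ_α(t), Φ_α(0) = I. Then the map α ↦ Φ_α(t) is differentiable at α = 0, and ∂_α Φ_α(t)|_{α=0} = ∫₀ᵗ Φ₀(t)·Φ₀(τ)⁻¹·M(τ)·Φ₀(τ) dτ. -/
attribute [local instance] Matrix.linftyOpNormedRing Matrix.linftyOpNormedAlgebra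

/-!
Conjugating by the unperturbed solution, `G_α = Φ₀⁻¹ Φ_α` solves `G_α' = α B G_α`, `G_α(0) = 1`,
with `B = Φ₀⁻¹ M Φ₀`; hence `G_α(t) - 1 = α ∫₀ᵗ B G_α`. Grönwall's inequality makes `G_α → 1`
uniformly between `0` and `t` as `α → 0`, so the difference quotient `∫₀ᵗ B G_α` of `α ↦ G_α(t)`
tends to `∫₀ᵗ B`. Multiplying by `Φ₀(t)` gives the derivative of `α ↦ Φ_α(t)`.
-/

open Filter Topology Set intervalIntegral

variable {E : Type*} [NormedRing E] [NormedAlgebra ℝ E]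

theorem gronwallBound_zero_mul (K c x : ℝ) :
    gronwallBound 0 K (K * c) x = c * (Real.exp (K * x) - 1) := by
  rcases eq_or_ne K 0 with rfl | hK
  · simp [gronwallBound_K0]
  · rw [gronwallBound_of_K_ne_0 hK]
    field_simp
    ring

theorem norm_sub_le_of_hasDerivAt_mul_of_le {A G : ℝ → E} {K a b : ℝ} (hab : a ≤ b)
    (hG : ∀ s ∈ Icc a b, HasDerivAt G (A s * G s) s) (hA : ∀ s ∈ Icc a b, ‖A s‖ ≤ K) :
    ‖G b - G a‖ ≤ ‖G a‖ * (Real.exp (K * (b - a)) - 1) := by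
  have hK : 0 ≤ K := (norm_nonneg _).trans (hA a (left_mem_Icc.2 hab))
  rw [← gronwallBound_zero_mul]
  refine norm_le_gronwallBound_of_norm_deriv_right_le (f := fun s => G s - G a)
    (fun s hs => (hG s hs).continuousAt.continuousWithinAt.sub continuousWithinAt_const)
    (fun s hs => ((hG s (Ico_subset_Icc_self hs)).sub_const _).hasDerivWithinAt)
    (by simp) (fun s hs => ?_) b (right_mem_Icc.2 hab)
  calc ‖A s * G s‖ ≤ K * ‖G s - G a + G a‖ := by
        rw [sub_add_cancel]
        exact (norm_mul_le _ _).trans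
          (mul_le_mul_of_nonneg_right (hA s (Ico_subset_Icc_self hs)) (norm_nonneg _))
    _ ≤ K * ‖G s - G a‖ + K * ‖G a‖ := by
        rw [← mul_add]
        exact mul_le_mul_of_nonneg_left (norm_add_le _ _) hK

theorem norm_sub_le_of_hasDerivAt_mul {A G : ℝ → E} {K a b : ℝ}
    (hG : ∀ s ∈ uIcc a b, HasDerivAt G (A s * G s) s) (hA : ∀ s ∈ uIcc a b, ‖A s‖ ≤ K) :
    ‖G b - G a‖ ≤ ‖G a‖ * (Real.exp (K * |b - a|) - 1) := by
  rcases le_total a b with hab | hba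
  · rw [uIcc_of_le hab] at hG hA
    rw [abs_of_nonneg (sub_nonneg.2 hab)]
    exact norm_sub_le_of_hasDerivAt_mul_of_le hab hG hA
  · rw [uIcc_of_ge hba] at hG hA
    have hneg : ∀ s ∈ Icc (-a) (-b), -s ∈ Icc b a := fun s hs =>
      ⟨by linarith [hs.2], by linarith [hs.1]⟩
    have h := norm_sub_le_of_hasDerivAt_mul_of_le (A := fun s => -A (-s)) (G := fun s => G (-s))
      (K := K) (neg_le_neg hba)
      (fun s hs => by
        simpa [Function.comp_def] using (hG (-s) (hneg s hs)).scomp s (hasDerivAt_neg s))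
      (fun s hs => by simpa using hA (-s) (hneg s hs))
    rw [abs_of_nonpos (sub_nonpos.2 hba)]
    simpa [sub_eq_add_neg, add_comm] using h

theorem HasDerivAt.ringInverse [CompleteSpace E] {U : ℝ → E} {U' : E} {s : ℝ}
    (hU : HasDerivAt U U' s) (hs : IsUnit (U s)) :
    HasDerivAt (fun τ => Ring.inverse (U τ))
      (-(Ring.inverse (U s) * U' * Ring.inverse (U s))) s := by
  obtain ⟨u, hu⟩ := hs
  simpa [Function.comp_def, ← hu, Ring.inverse_unit] using
    (hasFDerivAt_ringInverse (𝕜 := ℝ) u).comp_hasDerivAt_of_eq s hU hu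

theorem HasDerivAt.ringInverse_mul [CompleteSpace E] {U V : ℝ → E} {P Q : E} {s : ℝ}
    (hU : HasDerivAt U (P * U s) s) (hV : HasDerivAt V (Q * V s) s) (hs : IsUnit (U s)) :
    HasDerivAt (fun τ => Ring.inverse (U τ) * V τ) (Ring.inverse (U s) * (Q - P) * V s) s := by
  refine ((hU.ringInverse hs).mul hV).congr_deriv ?_
  rw [← mul_assoc _ P, mul_assoc _ (U s), Ring.mul_inverse_cancel _ hs]
  noncomm_ring

section SmulMulPerturbation

variable {B : ℝ → E} {G : ℝ → ℝ → E}

theorem norm_sub_one_le_of_hasDerivAt_smul_mul {C t : ℝ} (hG0 : ∀ α, G α 0 = 1)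
    (hG : ∀ α s, HasDerivAt (G α) (α • (B s * G α s)) s) (hC : ∀ s ∈ uIcc 0 t, ‖B s‖ ≤ C)
    (α : ℝ) {s : ℝ} (hs : s ∈ uIcc 0 t) :
    ‖G α s - 1‖ ≤ ‖(1 : E)‖ * (Real.exp (|α| * C * |t|) - 1) := by
  have hsub : uIcc 0 s ⊆ uIcc 0 t := uIcc_subset_uIcc_left hs
  have hC0 : 0 ≤ C := (norm_nonneg _).trans (hC 0 left_mem_uIcc)
  have h := norm_sub_le_of_hasDerivAt_mul (A := fun τ => α • B τ) (K := |α| * C)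
    (fun τ _ => by simpa only [smul_mul_assoc] using hG α τ)
    (fun τ hτ => by
      rw [norm_smul, Real.norm_eq_abs]
      exact mul_le_mul_of_nonneg_left (hC τ (hsub hτ)) (abs_nonneg α))
  rw [hG0, sub_zero] at h
  refine h.trans (mul_le_mul_of_nonneg_left ?_ (norm_nonneg _))
  have hst : |s| ≤ |t| := by simpa using abs_sub_left_of_mem_uIcc hs
  gcongr Real.exp (_ * ?_) - 1

theorem hasDerivAt_zero_of_hasDerivAt_smul_mul [CompleteSpace E] (hB : Continuous B)
    (hG0 : ∀ α, G α 0 = 1) (hG : ∀ α s, HasDerivAt (G α) (α • (B s * G α s)) s) (t : ℝ) :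
    HasDerivAt (fun α => G α t) (∫ τ in 0..t, B τ) 0 := by
  have hBG_int : ∀ α, IntervalIntegrable (fun τ => B τ * G α τ) MeasureTheory.volume 0 t :=
    fun α =>
      (hB.mul (continuous_iff_continuousAt.2 fun s => (hG α s).continuousAt)).intervalIntegrable 0 t
  have hsolve : ∀ α, G α t - 1 = α • ∫ τ in 0..t, B τ * G α τ := fun α => by
    rw [← integral_smul, integral_eq_sub_of_hasDerivAt (fun s _ => hG α s) ((hBG_int α).smul α),
      hG0]
  obtain ⟨C, hC⟩ := isCompact_uIcc.exists_bound_of_continuousOn hB.continuousOn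
  have hbound : ∀ α, ‖(∫ τ in 0..t, B τ * G α τ) - ∫ τ in 0..t, B τ‖
      ≤ C * (‖(1 : E)‖ * (Real.exp (|α| * C * |t|) - 1)) * |t - 0| := fun α => by
    rw [← integral_sub (hBG_int α) (hB.intervalIntegrable 0 t)]
    refine norm_integral_le_of_norm_le_const fun s hs => ?_
    have hs' := uIoc_subset_uIcc hs
    rw [← mul_sub_one]
    exact (norm_mul_le _ _).trans (mul_le_mul (hC s hs')
      (norm_sub_one_le_of_hasDerivAt_smul_mul hG0 hG hC α hs') (norm_nonneg _)
      ((norm_nonneg _).trans (hC s hs')))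
  have hlim : Tendsto (fun α => ∫ τ in 0..t, B τ * G α τ) (𝓝 0) (𝓝 (∫ τ in 0..t, B τ)) := by
    refine tendsto_iff_norm_sub_tendsto_zero.2 (squeeze_zero (fun _ => norm_nonneg _) hbound ?_)
    have : Continuous fun α : ℝ => C * (‖(1 : E)‖ * (Real.exp (|α| * C * |t|) - 1)) * |t - 0| := by
      fun_prop
    simpa using this.tendsto 0
  have hG0t : G 0 t = 1 := by simpa [sub_eq_zero] using hsolve 0
  rw [hasDerivAt_iff_tendsto_slope_zero]
  refine (hlim.mono_left nhdsWithin_le_nhds).congr' ?_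
  filter_upwards [self_mem_nhdsWithin] with α hα
  rw [zero_add, hG0t, hsolve, inv_smul_smul₀ hα]

end SmulMulPerturbation

theorem ordered_exponential_parametric_derivative_general {n : ℕ}
    (L M : ℝ → Matrix (Fin n) (Fin n) ℝ) (hM : Continuous M)
    (Φ : ℝ → ℝ → Matrix (Fin n) (Fin n) ℝ)
    (hΦ0 : ∀ α : ℝ, Φ α 0 = 1)
    (hΦ : ∀ α t : ℝ, HasDerivAt (Φ α) ((L t + α • M t) * Φ α t) t)
    (hinv : ∀ t : ℝ, IsUnit (Φ 0 t)) :
    ∀ t : ℝ, HasDerivAt (fun α => Φ α t)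
      (∫ τ in (0:ℝ)..t, Φ 0 t * (Φ 0 τ)⁻¹ * M τ * Φ 0 τ) 0 := by
  intro t
  set B : ℝ → Matrix (Fin n) (Fin n) ℝ := fun τ => Ring.inverse (Φ 0 τ) * M τ * Φ 0 τ
  have hB : Continuous B :=
    ((continuous_iff_continuousAt.2 fun s => ((hΦ 0 s).ringInverse (hinv s)).continuousAt).mul
      hM).mul (continuous_iff_continuousAt.2 fun s => (hΦ 0 s).continuousAt)
  have hG : ∀ α s, HasDerivAt (fun τ => Ring.inverse (Φ 0 τ) * Φ α τ)
      (α • (B s * (Ring.inverse (Φ 0 s) * Φ α s))) s := fun α s => by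
    refine ((hΦ 0 s).ringInverse_mul (hΦ α s) (hinv s)).congr_deriv ?_
    simp only [B, zero_smul, add_zero, add_sub_cancel_left, mul_smul_comm, smul_mul_assoc,
      mul_assoc, Ring.mul_inverse_cancel_left _ _ (hinv s)]
  have hG0 : ∀ α, Ring.inverse (Φ 0 0) * Φ α 0 = 1 := fun α => by
    rw [hΦ0, hΦ0, Ring.inverse_one, one_mul]
  have hintegral : ∫ τ in (0:ℝ)..t, Φ 0 t * (Φ 0 τ)⁻¹ * M τ * Φ 0 τ
      = Φ 0 t * ∫ τ in (0:ℝ)..t, B τ := by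
    have h := (hB.intervalIntegrable (μ := MeasureTheory.volume) 0 t).integral_smul (Φ 0 t)
    simp only [B, smul_eq_mul, Matrix.nonsing_inv_eq_ringInverse, mul_assoc] at h ⊢
    exact h
  have h := (hasDerivAt_zero_of_hasDerivAt_smul_mul hB hG0 hG t).const_mul (Φ 0 t)
  simp only [Ring.mul_inverse_cancel_left _ _ (hinv t)] at h
  rw [hintegral]
  exact h

/-- Parametric derivative of the ordered exponential: if `Φ_α` solves
`dΦ_α/dt = (L(t) + α M(t)) Φ_α(t)`, `Φ_α(0) = I`, then
`∂_α Φ_α(t)|_{α=0} = ∫₀ᵗ Φ₀(t) Φ₀(τ)⁻¹ M(τ) Φ₀(τ) dτ`. -/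
theorem ordered_exponential_parametric_derivative {n : ℕ}
    (L M : ℝ → Matrix (Fin n) (Fin n) ℝ) (hL : Continuous L) (hM : Continuous M)
    (Φ : ℝ → ℝ → Matrix (Fin n) (Fin n) ℝ)
    (hΦ0 : ∀ α : ℝ, Φ α 0 = 1)
    (hΦ : ∀ α t : ℝ, HasDerivAt (Φ α) ((L t + α • M t) * Φ α t) t)
    (hinv : ∀ t : ℝ, IsUnit (Φ 0 t)) :
    ∀ t : ℝ, HasDerivAt (fun α => Φ α t)
      (∫ τ in (0:ℝ)..t, Φ 0 t * (Φ 0 τ)⁻¹ * M τ * Φ 0 τ) 0 :=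
  ordered_exponential_parametric_derivative_general L M hM Φ hΦ0 hΦ hinv
end

section
/- Let A, B ∈ Mat(n,n,ℝ) and define F(α) = exp(t(A + αB)) for t ∈ ℝ fixed. Then F is differentiable at α = 0 with F'(0) = ∫₀ᵗ exp((t−s)A) · B · exp(sA) ds. -/
/-!
Duhamel's formula `exp (t • (A + C)) - exp (t • A) = ∫₀ᵗ exp ((t - s) • A) * C * exp (s • (A + C))`
comes from differentiating `s ↦ exp ((t - s) • A) * exp (s • (A + C))`. With `C = α • B` it
writes `exp (t • (A + α • B)) - exp (t • A)` as `α` times an integral that depends continuously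
on `α`, and the value of that integral at `α = 0` is the derivative.
-/

attribute [local instance] Matrix.linftyOpNormedRing Matrix.linftyOpNormedAlgebra

open NormedSpace

theorem hasDerivAt_of_sub_eq_smul {E : Type*} [NormedAddCommGroup E] [NormedSpace ℝ E]
    {f g : ℝ → E} {a : ℝ} (hfg : ∀ x, f x - f a = (x - a) • g x) (hg : ContinuousAt g a) :
    HasDerivAt f (g a) a := by
  refine hasDerivAt_iff_tendsto_slope.mpr (hg.tendsto.mono_left nhdsWithin_le_nhds |>.congr' ?_)
  filter_upwards [self_mem_nhdsWithin] with x hx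
  rw [slope_def_module, hfg, smul_smul, inv_mul_cancel₀ (sub_ne_zero.mpr hx), one_smul]

section RealBanachAlgebra

variable {𝔸 : Type*} [NormedRing 𝔸] [NormedAlgebra ℝ 𝔸] [CompleteSpace 𝔸]

@[fun_prop]
theorem exp_continuous_of_normedAlgebra_real : Continuous (exp : 𝔸 → 𝔸) :=
  let _ : NormedAlgebra ℚ 𝔸 := NormedAlgebra.restrictScalars ℚ ℝ 𝔸
  exp_continuous

theorem hasDerivAt_exp_sub_smul_mul_exp_smul_add (A C : 𝔸) (t s : ℝ) :
    HasDerivAt (fun s : ℝ => exp ((t - s) • A) * exp (s • (A + C)))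
      (exp ((t - s) • A) * C * exp (s • (A + C))) s := by
  have hleft : HasDerivAt (fun s : ℝ => exp ((t - s) • A)) (-(exp ((t - s) • A) * A)) s := by
    have := (hasDerivAt_exp_smul_const A (t - s)).scomp s ((hasDerivAt_id s).const_sub t)
    simpa [Function.comp_def] using this
  have hright : HasDerivAt (fun s : ℝ => exp (s • (A + C))) ((A + C) * exp (s • (A + C))) s :=
    hasDerivAt_exp_smul_const' (A + C) s
  refine (hleft.mul hright).congr_deriv ?_
  simp only [neg_mul, add_mul, mul_add, mul_assoc]
  abel

theorem exp_smul_add_sub_exp_smul (A C : 𝔸) (t : ℝ) :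
    exp (t • (A + C)) - exp (t • A)
      = ∫ s in (0:ℝ)..t, exp ((t - s) • A) * C * exp (s • (A + C)) := by
  have hcont : Continuous fun s : ℝ => exp ((t - s) • A) * C * exp (s • (A + C)) := by
    fun_prop
  rw [intervalIntegral.integral_eq_sub_of_hasDerivAt
    (fun s _ => hasDerivAt_exp_sub_smul_mul_exp_smul_add A C t s) (hcont.intervalIntegrable 0 t)]
  simp

theorem continuous_intervalIntegral_exp_mul_exp_smul_add_smul (A B : 𝔸) (t : ℝ) :
    Continuous fun α : ℝ => ∫ s in (0:ℝ)..t, exp ((t - s) • A) * B * exp (s • (A + α • B)) :=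
  intervalIntegral.continuous_parametric_intervalIntegral_of_continuous
    (by fun_prop) continuous_const

theorem hasDerivAt_exp_smul_add_smul (A B : 𝔸) (t : ℝ) :
    HasDerivAt (fun α : ℝ => exp (t • (A + α • B)))
      (∫ s in (0:ℝ)..t, exp ((t - s) • A) * B * exp (s • A)) 0 := by
  have hduhamel : ∀ α : ℝ, exp (t • (A + α • B)) - exp (t • (A + (0 : ℝ) • B)) =
      (α - 0) • ∫ s in (0:ℝ)..t, exp ((t - s) • A) * B * exp (s • (A + α • B)) := by
    intro α
    rw [zero_smul, add_zero, sub_zero, exp_smul_add_sub_exp_smul,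
      ← intervalIntegral.integral_smul]
    simp only [mul_smul_comm, smul_mul_assoc]
  simpa only [zero_smul, add_zero] using hasDerivAt_of_sub_eq_smul hduhamel
    (continuous_intervalIntegral_exp_mul_exp_smul_add_smul A B t).continuousAt

end RealBanachAlgebra

/-- Derivative of the matrix exponential with respect to a parameter:
`d/dα exp(t(A + αB))|_{α=0} = ∫₀ᵗ exp((t-s)A) B exp(sA) ds`. -/
theorem matrix_exp_parametric_derivative {n : ℕ}
    (A B : Matrix (Fin n) (Fin n) ℝ) (t : ℝ) :
    HasDerivAt (fun α : ℝ => exp (t • (A + α • B)))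
      (∫ s in (0:ℝ)..t, exp ((t - s) • A) * B * exp (s • A)) 0 :=
  hasDerivAt_exp_smul_add_smul A B t
end
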